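/- Let τ ∈ (0, 1/4) with τ ≠ 1/12, and let b_* = (3(1−4τ))^{−1/3}. Then D(b_*) = −(12τ−1)³/(36(1−4τ)²), and the cubic polynomial u³ − R(b_*)u + D(b_*) has a real double root λ and a simple real root −2λ, where 2λ³ = D(b_*); in particular λ > 0 when 0 < τ < 1/12 and λ < 0 when 1/12 < τ < 1/4, so the repeated root is the largest root in the first case and the smallest root in the second case. -/

import Mathlib

noncomputable section

/-- The constant `c = −(243(1−4τ)²/64)^{1/3}` (real cube root). -/
def ccf (τ : ℝ) : ℝ := -(243 * (1 - 4 * τ) ^ 2 / 64) ^ ((1 : ℝ) / 3)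

/-- `R(z) = 3z⁴ − 3z − c`. -/
def RR (τ : ℝ) (z : ℂ) : ℂ := 3 * z ^ 4 - 3 * z - (ccf τ : ℂ)

/-- `D(z) = −2z⁶ + 3z³ + cz² − 3τ`. -/
def DD (τ : ℝ) (z : ℂ) : ℂ :=
  -2 * z ^ 6 + 3 * z ^ 3 + (ccf τ : ℂ) * z ^ 2 - 3 * (τ : ℂ)

/-- The quartic `q₁`. -/
def q1 (τ : ℝ) (z : ℂ) : ℂ :=
  ((256 / (3 : ℝ) ^ ((5 : ℝ) / 3) * (1 - 4 * τ) ^ ((1 : ℝ) / 3) : ℝ) : ℂ) * z ^ 4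
    + (128 / 9 : ℂ) * z ^ 3
    + ((16 / (3 : ℝ) ^ ((1 : ℝ) / 3) * (1 - 4 * τ) ^ ((2 : ℝ) / 3) : ℝ) : ℂ) * z ^ 2
    - ((32 * (3 : ℝ) ^ ((1 : ℝ) / 3) * (1 - 4 * τ) ^ ((1 : ℝ) / 3) : ℝ) : ℂ) * z
    + ((16 * (1 - 8 * τ) : ℝ) : ℂ)

/-- The linear factor `q₂`. -/
def q2 (τ : ℝ) (z : ℂ) : ℂ :=
  (((3 : ℝ) ^ ((1 : ℝ) / 3) * (1 - 4 * τ) ^ ((1 : ℝ) / 3) : ℝ) : ℂ) * z - 1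

/-- The double point `b_* = (3(1−4τ))^{−1/3}`. -/
def bstar (τ : ℝ) : ℝ := (3 * (1 - 4 * τ)) ^ (-(1 : ℝ) / 3)


/-!
With `b = b_*` we have `3(1 − 4τ)b³ = 1` and `c b² = −3/4`, the latter because
`243(1 − 4τ)²/64 = (3/(4b²))³`. For `λ = (1 − 12τ)b²/2` these two relations give
`R(b) = 3λ²` and `D(b) = 2λ³`, so the cubic is `u³ − 3λ²u + 2λ³ = (u − λ)²(u + 2λ)`,
and the sign of `λ` is that of `1 − 12τ`.
-/

lemma Real.rpow_neg_one_third_pow_three {x : ℝ} (hx : 0 ≤ x) :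
    (x ^ (-(1 : ℝ) / 3)) ^ 3 = x⁻¹ := by
  rw [← Real.rpow_natCast, ← Real.rpow_mul hx]
  norm_num [Real.rpow_neg_one]

lemma bstar_pos {τ : ℝ} (hτ : τ < 1 / 4) : 0 < bstar τ :=
  Real.rpow_pos_of_pos (by linarith) _

lemma bstar_pow_three {τ : ℝ} (hτ : τ ≤ 1 / 4) : bstar τ ^ 3 = (3 * (1 - 4 * τ))⁻¹ :=
  Real.rpow_neg_one_third_pow_three (by linarith)

lemma three_mul_one_sub_four_mul_mul_bstar_pow_three {τ : ℝ} (hτ : τ < 1 / 4) :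
    3 * (1 - 4 * τ) * bstar τ ^ 3 = 1 := by
  rw [bstar_pow_three hτ.le, mul_inv_cancel₀ (by linarith)]

lemma ccf_mul_bstar_sq {τ : ℝ} (hτ : τ < 1 / 4) : ccf τ * bstar τ ^ 2 = -3 / 4 := by
  have hb : 0 < bstar τ := bstar_pos hτ
  have hcube : 243 * (1 - 4 * τ) ^ 2 / 64 = (3 / (4 * bstar τ ^ 2)) ^ 3 := by
    have : (3 / (4 * bstar τ ^ 2)) ^ 3 = 27 / 64 * ((bstar τ ^ 3)⁻¹) ^ 2 := by
      field_simp
      norm_num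
    rw [this, bstar_pow_three hτ.le, inv_inv]
    ring
  have hroot : ((3 / (4 * bstar τ ^ 2)) ^ 3) ^ ((1 : ℝ) / 3) = 3 / (4 * bstar τ ^ 2) := by
    simpa using Real.pow_rpow_inv_natCast (x := 3 / (4 * bstar τ ^ 2)) (by positivity)
      three_ne_zero
  rw [ccf, hcube, hroot]
  field_simp

def doubleRoot (τ : ℝ) : ℝ := (1 - 12 * τ) * bstar τ ^ 2 / 2

lemma doubleRoot_pos {τ : ℝ} (hτ : τ < 1 / 12) : 0 < doubleRoot τ := by
  have hb : 0 < bstar τ := bstar_pos (by linarith)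
  have hτ' : 0 < 1 - 12 * τ := by linarith
  unfold doubleRoot
  positivity

lemma doubleRoot_neg {τ : ℝ} (hτ₁ : 1 / 12 < τ) (hτ₂ : τ < 1 / 4) : doubleRoot τ < 0 := by
  have hb : 0 < bstar τ := bstar_pos hτ₂
  have hτ' : 1 - 12 * τ < 0 := by linarith
  exact div_neg_of_neg_of_pos (mul_neg_of_neg_of_pos hτ' (by positivity)) two_pos

lemma two_mul_doubleRoot_pow_three {τ : ℝ} (hτ : τ < 1 / 4) :
    2 * doubleRoot τ ^ 3 = -((12 * τ - 1) ^ 3 / (36 * (1 - 4 * τ) ^ 2)) := by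
  have hb6 : bstar τ ^ 6 = (3 * (1 - 4 * τ))⁻¹ ^ 2 := by
    rw [← bstar_pow_three hτ.le]; ring
  have : 1 - 4 * τ ≠ 0 := by linarith
  rw [doubleRoot, div_pow, mul_pow, ← pow_mul, hb6]
  field_simp
  ring

lemma RR_bstar {τ : ℝ} (hτ : τ < 1 / 4) : RR τ (bstar τ) = 3 * (doubleRoot τ : ℂ) ^ 2 := by
  have hb : (bstar τ : ℂ) ≠ 0 := by exact_mod_cast (bstar_pos hτ).ne'
  have hs : 3 * (1 - 4 * (τ : ℂ)) * (bstar τ : ℂ) ^ 3 = 1 := by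
    exact_mod_cast three_mul_one_sub_four_mul_mul_bstar_pow_three hτ
  have hc : (ccf τ : ℂ) * (bstar τ : ℂ) ^ 2 = -3 / 4 := by
    exact_mod_cast ccf_mul_bstar_sq hτ
  refine mul_right_cancel₀ (pow_ne_zero 2 hb) ?_
  rw [RR, doubleRoot]
  push_cast
  linear_combination -hc + (3 * ((1 + 12 * (τ : ℂ)) * (bstar τ : ℂ) ^ 3 - 1) / 4) * hs

lemma DD_bstar {τ : ℝ} (hτ : τ < 1 / 4) : DD τ (bstar τ) = 2 * (doubleRoot τ : ℂ) ^ 3 := by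
  have hs : 3 * (1 - 4 * (τ : ℂ)) * (bstar τ : ℂ) ^ 3 = 1 := by
    exact_mod_cast three_mul_one_sub_four_mul_mul_bstar_pow_three hτ
  have hc : (ccf τ : ℂ) * (bstar τ : ℂ) ^ 2 = -3 / 4 := by
    exact_mod_cast ccf_mul_bstar_sq hτ
  rw [DD, doubleRoot]
  push_cast
  linear_combination hc + ((-(bstar τ : ℂ) ^ 3 * (12 * (τ : ℂ)) ^ 2 + 12 * (τ : ℂ) + 3
    - 3 * (bstar τ : ℂ) ^ 3) / 4) * hs

theorem double_root_at_bstar_general (τ : ℝ) (hτ : τ ∈ Set.Ioo (0 : ℝ) (1 / 4)) :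
    DD τ ((bstar τ : ℝ) : ℂ) = -(((12 * τ - 1) ^ 3 / (36 * (1 - 4 * τ) ^ 2) : ℝ) : ℂ) ∧
    ∃ lam : ℝ, 2 * ((lam : ℝ) : ℂ) ^ 3 = DD τ ((bstar τ : ℝ) : ℂ) ∧
      (∀ u : ℂ, u ^ 3 - RR τ ((bstar τ : ℝ) : ℂ) * u + DD τ ((bstar τ : ℝ) : ℂ)
        = (u - ((lam : ℝ) : ℂ)) ^ 2 * (u + 2 * ((lam : ℝ) : ℂ))) ∧
      (τ < 1 / 12 → 0 < lam) ∧ (1 / 12 < τ → lam < 0) := by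
  have hτ₄ : τ < 1 / 4 := hτ.2
  refine ⟨?_, doubleRoot τ, (DD_bstar hτ₄).symm, fun u => ?_, doubleRoot_pos,
    fun h => doubleRoot_neg h hτ₄⟩
  · rw [DD_bstar hτ₄]
    exact_mod_cast two_mul_doubleRoot_pow_three hτ₄
  · rw [RR_bstar hτ₄, DD_bstar hτ₄]
    ring

/-- Let `τ ∈ (0,1/4)`, `τ ≠ 1/12`, and `b_* = (3(1−4τ))^{−1/3}`. Then
`D(b_*) = −(12τ−1)³/(36(1−4τ)²)`, and the cubic `u³ − R(b_*)u + D(b_*)` has a real double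
root `λ` and a simple real root `−2λ` with `2λ³ = D(b_*)`; in particular `λ > 0` when
`0 < τ < 1/12` and `λ < 0` when `1/12 < τ < 1/4`. -/
theorem double_root_at_bstar (τ : ℝ) (hτ : τ ∈ Set.Ioo (0 : ℝ) (1 / 4))
    (hτ' : τ ≠ 1 / 12) :
    DD τ ((bstar τ : ℝ) : ℂ) = -(((12 * τ - 1) ^ 3 / (36 * (1 - 4 * τ) ^ 2) : ℝ) : ℂ) ∧
    ∃ lam : ℝ, 2 * ((lam : ℝ) : ℂ) ^ 3 = DD τ ((bstar τ : ℝ) : ℂ) ∧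
      (∀ u : ℂ, u ^ 3 - RR τ ((bstar τ : ℝ) : ℂ) * u + DD τ ((bstar τ : ℝ) : ℂ)
        = (u - ((lam : ℝ) : ℂ)) ^ 2 * (u + 2 * ((lam : ℝ) : ℂ))) ∧
      (τ < 1 / 12 → 0 < lam) ∧ (1 / 12 < τ → lam < 0) :=
  double_root_at_bstar_general τ hτ
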